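/- Let H be a finite simple graph in which every vertex has even degree (an eulerian graph) with e(H) ≥ 2, let n ≥ 1, let A ∈ Sym_{2n} be the block matrix [[J_n, −J_n], [−J_n, J_n]] (J_n the n×n all-ones matrix), and let J_{2n} be the 2n×2n all-ones matrix. Then the second directional derivative of P_{H,2n} at A in the direction J_{2n} vanishes: (d²/ds²) P_{H,2n}(A + s J_{2n}) |_{s=0} = 0. -/

import Mathlib

open MeasureTheory

/-- A linear order on `Fin a × Fin b` (lexicographic), used to enumerate each edge once. -/
instance finProdLinearOrder {a b : ℕ} : LinearOrder (Fin a × Fin b) :=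
  LinearOrder.lift' (toLex : Fin a × Fin b → Fin a ×ₗ Fin b) toLex.injective

/-- The homomorphism density `t_H(W)` of a two-variable kernel `W` in a graph `H`. -/
noncomputable def homDensity {V : Type} [Fintype V] [LinearOrder V]
    (H : SimpleGraph V) [DecidableRel H.Adj] (W : ℝ → ℝ → ℝ) : ℝ :=
  ∫ x in (Set.univ.pi fun _ : V => Set.Icc (0 : ℝ) 1),
    ∏ p ∈ Finset.univ.filter (fun p : V × V => p.1 < p.2 ∧ H.Adj p.1 p.2),
      W (x p.1) (x p.2)

/-- The number of edges `e(H)` of `H`, enumerated as ordered pairs `(u,v)` with `u < v`. -/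
def edgeCount {V : Type} [Fintype V] [LinearOrder V]
    (H : SimpleGraph V) [DecidableRel H.Adj] : ℕ :=
  (Finset.univ.filter (fun p : V × V => p.1 < p.2 ∧ H.Adj p.1 p.2)).card

/-- Membership in `𝒲`: bounded symmetric measurable functions `[0,1]² → ℝ`
(defined on all of `ℝ²`). -/
def IsKernel (W : ℝ → ℝ → ℝ) : Prop :=
  Measurable (Function.uncurry W) ∧ (∀ x y, W x y = W y x) ∧ ∃ C : ℝ, ∀ x y, |W x y| ≤ C

/-- A graphon: symmetric measurable with values in `[0,1]`. -/
def IsGraphon (W : ℝ → ℝ → ℝ) : Prop :=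
  Measurable (Function.uncurry W) ∧ (∀ x y, W x y = W y x) ∧
    ∀ x y, W x y ∈ Set.Icc (0 : ℝ) 1

/-- A signed graphon: symmetric measurable with values in `[-1,1]`. -/
def IsSignedGraphon (W : ℝ → ℝ → ℝ) : Prop :=
  Measurable (Function.uncurry W) ∧ (∀ x y, W x y = W y x) ∧
    ∀ x y, W x y ∈ Set.Icc (-1 : ℝ) 1

/-- `H` is weakly norming: `W ↦ t_H(|W|)^{1/e(H)}` satisfies the triangle inequality on `𝒲`. -/
def WeaklyNorming {V : Type} [Fintype V] [LinearOrder V]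
    (H : SimpleGraph V) [DecidableRel H.Adj] : Prop :=
  ∀ U W : ℝ → ℝ → ℝ, IsKernel U → IsKernel W →
    homDensity H (fun x y => |U x y + W x y|) ^ ((edgeCount H : ℝ)⁻¹) ≤
      homDensity H (fun x y => |U x y|) ^ ((edgeCount H : ℝ)⁻¹) +
        homDensity H (fun x y => |W x y|) ^ ((edgeCount H : ℝ)⁻¹)

/-- `H` is norming: `W ↦ |t_H(W)|^{1/e(H)}` satisfies the triangle inequality on `𝒲`
and vanishes only at a.e.-zero functions. -/
def Norming {V : Type} [Fintype V] [LinearOrder V]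
    (H : SimpleGraph V) [DecidableRel H.Adj] : Prop :=
  (∀ U W : ℝ → ℝ → ℝ, IsKernel U → IsKernel W →
      |homDensity H (fun x y => U x y + W x y)| ^ ((edgeCount H : ℝ)⁻¹) ≤
        |homDensity H U| ^ ((edgeCount H : ℝ)⁻¹) +
          |homDensity H W| ^ ((edgeCount H : ℝ)⁻¹)) ∧
  (∀ W : ℝ → ℝ → ℝ, IsKernel W → homDensity H W = 0 →
      (∀ᵐ p : ℝ × ℝ ∂(volume.restrict (Set.Icc (0:ℝ) 1 ×ˢ Set.Icc (0:ℝ) 1)),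
        W p.1 p.2 = 0))

/-- The polynomial `P_{H,n}(A) = Σ_{φ : V(H) → [n]} Π_{uv ∈ E(H)} a_{φ(u)φ(v)}`. -/
noncomputable def graphPoly {V : Type} [Fintype V] [LinearOrder V]
    (H : SimpleGraph V) [DecidableRel H.Adj] {n : ℕ} (A : Matrix (Fin n) (Fin n) ℝ) : ℝ :=
  ∑ φ : V → Fin n,
    ∏ p ∈ Finset.univ.filter (fun p : V × V => p.1 < p.2 ∧ H.Adj p.1 p.2),
      A (φ p.1) (φ p.2)

/-- The graph `C_k^⋈` on `{1,…,k} × {1,2}`: `(u,i)` adjacent to `(v,j)` iff `i ≠ j` and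
`u - v ∈ {-1,0,1} (mod k)`. -/
def cycleBowtie (k : ℕ) : SimpleGraph (Fin k × Fin 2) where
  Adj p q := p.2 ≠ q.2 ∧
    (p.1 = q.1 ∨ ((p.1 : ℕ) + 1) % k = (q.1 : ℕ) ∨ ((q.1 : ℕ) + 1) % k = (p.1 : ℕ))
  symm := by
    constructor
    rintro p q ⟨h1, h2⟩
    refine ⟨h1.symm, ?_⟩
    rcases h2 with h | h | h
    · exact Or.inl h.symm
    · exact Or.inr (Or.inr h)
    · exact Or.inr (Or.inl h)
  loopless := by constructor; rintro p ⟨h1, -⟩; exact h1 rfl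

noncomputable instance (k : ℕ) : DecidableRel (cycleBowtie k).Adj :=
  fun _ _ => Classical.dec _

/-- `K_{t,t}` minus a perfect matching, on vertex set `Fin t × Fin 2`:
`(i,0)` is adjacent to `(j,1)` iff `i ≠ j`. -/
def kttMinusPM (t : ℕ) : SimpleGraph (Fin t × Fin 2) where
  Adj p q := p.2 ≠ q.2 ∧ p.1 ≠ q.1
  symm := by constructor; rintro p q ⟨h1, h2⟩; exact ⟨h1.symm, h2.symm⟩
  loopless := by constructor; rintro p ⟨h1, -⟩; exact h1 rfl

noncomputable instance (t : ℕ) : DecidableRel (kttMinusPM t).Adj :=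
  fun _ _ => Classical.dec _

/-- The Möbius ladder `K_{5,5} \ C_{10}` on `Fin 5 × Fin 2`, with parts
`a_i = (i,0)`, `b_j = (j,1)`; `a_i ~ b_j` iff `j ∉ {i, i+1} (mod 5)`. -/
def mobius : SimpleGraph (Fin 5 × Fin 2) where
  Adj p q := p.2 ≠ q.2 ∧
    ((p.2 = 0 ∧ (q.1 : ℕ) ≠ (p.1 : ℕ) ∧ (q.1 : ℕ) ≠ ((p.1 : ℕ) + 1) % 5) ∨
     (q.2 = 0 ∧ (p.1 : ℕ) ≠ (q.1 : ℕ) ∧ (p.1 : ℕ) ≠ ((q.1 : ℕ) + 1) % 5))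
  symm := by constructor; rintro p q ⟨h1, h2⟩; exact ⟨h1.symm, h2.symm⟩
  loopless := by constructor; rintro p ⟨h1, -⟩; exact h1 rfl

noncomputable instance : DecidableRel mobius.Adj := fun _ _ => Classical.dec _

/-- The block matrix `[[J_n, -J_n], [-J_n, J_n]]`. -/
def blockMat (n : ℕ) : Matrix (Fin (2*n)) (Fin (2*n)) ℝ :=
  Matrix.of fun i j => if (((i : ℕ) < n) ↔ ((j : ℕ) < n)) then 1 else -1

/-- The `m × m` all-ones matrix `J_m`. -/
def onesMat (m : ℕ) : Matrix (Fin m) (Fin m) ℝ := Matrix.of fun _ _ => 1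

/-- The step function `U_A` associated to an `n × n` matrix `A`. -/
noncomputable def stepFn (n : ℕ) (A : Matrix (Fin n) (Fin n) ℝ) : ℝ → ℝ → ℝ := fun x y =>
  if h : 0 < n ∧ x ∈ Set.Ico (0 : ℝ) 1 ∧ y ∈ Set.Ico (0 : ℝ) 1 then
    A ⟨⌊n * x⌋₊ % n, Nat.mod_lt _ h.1⟩ ⟨⌊n * y⌋₊ % n, Nat.mod_lt _ h.1⟩
  else 0

/-- The cut norm `‖W‖_□ = sup_{S,T ⊆ [0,1]} |∫_{S×T} W|`. -/
noncomputable def cutNorm (W : ℝ → ℝ → ℝ) : ℝ :=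
  sSup { r : ℝ | ∃ S T : Set ℝ, MeasurableSet S ∧ MeasurableSet T ∧
    S ⊆ Set.Icc 0 1 ∧ T ⊆ Set.Icc 0 1 ∧
    r = |∫ p in S ×ˢ T, W p.1 p.2| }

/-!
Along the line `A + sJ` each term of `P_H` is `∏_{uv ∈ E} (s + a_{φ(u)φ(v)})`, so the second
derivative at `0` is twice the sum, over the sets `T` of `e(H) - 2` edges, of
`Σ_φ ∏_{uv ∈ T} a_{φ(u)φ(v)}`. For `A = εεᵀ`, with `ε` the `±1` block sign vector, this sum
factorises as `∏_v Σ_i ε_i ^ deg_T(v)`. Deleting two distinct edges from an eulerian graph leaves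
a vertex of odd degree, and `Σ_i ε_i ^ odd = Σ_i ε_i = 0`.
-/

open Finset Polynomial

theorem Polynomial.iteratedDeriv_eval {𝕜 : Type*} [NontriviallyNormedField 𝕜] (p : 𝕜[X])
    (k : ℕ) : iteratedDeriv k (fun x => p.eval x) = fun x => (derivative^[k] p).eval x := by
  induction k with
  | zero => simp
  | succ k ih =>
    ext x
    rw [iteratedDeriv_succ, ih, Function.iterate_succ_apply', Polynomial.deriv]

theorem Polynomial.iteratedDeriv_eval_zero {𝕜 : Type*} [NontriviallyNormedField 𝕜] (p : 𝕜[X])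
    (k : ℕ) : iteratedDeriv k (fun x => p.eval x) 0 = k.factorial * p.coeff k := by
  simp only [iteratedDeriv_eval]
  rw [← coeff_zero_eq_eval_zero, coeff_iterate_derivative, zero_add,
    Nat.descFactorial_self, nsmul_eq_mul]

section PairDegree

variable {V : Type*} [DecidableEq V]

def pairDegree (T : Finset (V × V)) (v : V) : ℕ :=
  ∑ p ∈ T, ((if p.1 = v then 1 else 0) + (if p.2 = v then 1 else 0))

theorem prod_mul_eq_prod_pow_pairDegree [Fintype V] {M : Type*} [CommMonoid M] (g : V → M)
    (T : Finset (V × V)) : ∏ p ∈ T, g p.1 * g p.2 = ∏ v, g v ^ pairDegree T v := by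
  simp only [pairDegree, ← prod_pow_eq_pow_sum]
  rw [prod_comm]
  refine prod_congr rfl fun p _ => ?_
  simp only [pow_add, prod_mul_distrib, prod_pow_boole, mem_univ, if_true]

theorem sum_prod_mul_eq_prod_sum_pow [Fintype V] {ι R : Type*} [Fintype ι] [CommSemiring R]
    (g : ι → R) (T : Finset (V × V)) :
    ∑ φ : V → ι, ∏ p ∈ T, g (φ p.1) * g (φ p.2) = ∏ v, ∑ i, g i ^ pairDegree T v := by
  rw [Fintype.prod_sum]
  exact sum_congr rfl fun φ _ => prod_mul_eq_prod_pow_pairDegree (g ∘ φ) T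

end PairDegree

def blockSign (n : ℕ) (i : Fin (2 * n)) : ℝ := if (i : ℕ) < n then 1 else -1

theorem blockMat_apply_eq_mul (n : ℕ) (i j : Fin (2 * n)) :
    blockMat n i j = blockSign n i * blockSign n j := by
  by_cases hi : (i : ℕ) < n <;> by_cases hj : (j : ℕ) < n <;> simp [blockMat, blockSign, hi, hj]

theorem sum_blockSign_pow_of_odd (n : ℕ) {k : ℕ} (hk : Odd k) :
    ∑ i, blockSign n i ^ k = 0 := by
  unfold blockSign
  rw [Fin.sum_univ_eq_sum_range (fun i => (if i < n then 1 else -1 : ℝ) ^ k), two_mul,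
    sum_range_add, ← sum_add_distrib]
  refine sum_eq_zero fun i hi => ?_
  rw [if_pos (mem_range.1 hi), if_neg (by omega), one_pow, hk.neg_one_pow, add_neg_cancel]

theorem exists_pairDegree_pair_eq_one {V : Type*} [LinearOrder V] {e f : V × V}
    (he : e.1 < e.2) (hf : f.1 < f.2) (hef : e ≠ f) : ∃ w, pairDegree {e, f} w = 1 := by
  simp only [pairDegree, sum_pair hef]
  by_cases h : e.1 = f.1 ∨ e.1 = f.2
  · exact ⟨e.2, by grind [Prod.ext_iff]⟩
  · exact ⟨e.1, by grind⟩

section EdgePairs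

variable {V : Type*} [Fintype V] [LinearOrder V] (H : SimpleGraph V) [DecidableRel H.Adj]

def edgePairs : Finset (V × V) := univ.filter fun p : V × V => p.1 < p.2 ∧ H.Adj p.1 p.2

theorem pairDegree_edgePairs (v : V) : pairDegree (edgePairs H) v = H.degree v := by
  have hfst : {p ∈ edgePairs H | p.1 = v} =
      {u ∈ H.neighborFinset v | v < u}.map (Function.Embedding.sectR v V) := by
    ext ⟨a, b⟩
    simp only [edgePairs, mem_filter, mem_univ, true_and, mem_map, SimpleGraph.mem_neighborFinset,
      Function.Embedding.sectR_apply, Prod.mk.injEq]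
    grind
  have hsnd : {p ∈ edgePairs H | p.2 = v} =
      {u ∈ H.neighborFinset v | ¬ v < u}.map (Function.Embedding.sectL V v) := by
    ext ⟨a, b⟩
    simp only [edgePairs, mem_filter, mem_univ, true_and, mem_map, SimpleGraph.mem_neighborFinset,
      Function.Embedding.sectL_apply, Prod.mk.injEq]
    grind [SimpleGraph.Adj.ne, SimpleGraph.adj_comm]
  rw [pairDegree, sum_add_distrib, sum_boole, sum_boole, Nat.cast_id, Nat.cast_id, hfst, hsnd,
    card_map, card_map, card_filter_add_card_filter_not, SimpleGraph.card_neighborFinset_eq_degree]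

theorem exists_odd_pairDegree_of_card_sdiff_eq_two (heul : ∀ v, Even (H.degree v))
    {T : Finset (V × V)} (hT : T ⊆ edgePairs H) (hcard : #(edgePairs H \ T) = 2) :
    ∃ w, Odd (pairDegree T w) := by
  obtain ⟨e, f, hef, hD⟩ := card_eq_two.1 hcard
  have hlt : ∀ p ∈ edgePairs H \ T, p.1 < p.2 := fun p hp => (mem_filter.1 (mem_sdiff.1 hp).1).2.1
  obtain ⟨w, hw⟩ := exists_pairDegree_pair_eq_one (hlt e (by simp [hD])) (hlt f (by simp [hD])) hef
  refine ⟨w, ?_⟩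
  have hsplit : pairDegree {e, f} w + pairDegree T w = H.degree w := by
    rw [← hD, pairDegree, pairDegree, sum_sdiff hT, ← pairDegree, pairDegree_edgePairs]
  have heven := heul w
  rwa [← hsplit, hw, add_comm, Nat.even_add_one, Nat.not_even_iff_odd] at heven

end EdgePairs

section GraphPoly

variable {V : Type} [Fintype V] [LinearOrder V] (H : SimpleGraph V) [DecidableRel H.Adj]
  {m : ℕ} (A : Matrix (Fin m) (Fin m) ℝ)

noncomputable def graphPolyAddSmulOnes : ℝ[X] :=
  ∑ φ : V → Fin m, ∏ p ∈ edgePairs H, (X + C (A (φ p.1) (φ p.2)))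

theorem eval_graphPolyAddSmulOnes (s : ℝ) :
    (graphPolyAddSmulOnes H A).eval s = graphPoly H (A + s • onesMat m) := by
  simp only [graphPolyAddSmulOnes, graphPoly, edgePairs, eval_finsetSum, eval_prod, eval_add,
    eval_X, eval_C, Matrix.add_apply, Matrix.smul_apply, onesMat, Matrix.of_apply, smul_eq_mul,
    mul_one, add_comm]

theorem coeff_graphPolyAddSmulOnes {k : ℕ} (hk : k ≤ edgeCount H) :
    (graphPolyAddSmulOnes H A).coeff k =
      ∑ T ∈ (edgePairs H).powersetCard (edgeCount H - k), ∑ φ : V → Fin m,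
        ∏ p ∈ T, A (φ p.1) (φ p.2) := by
  rw [graphPolyAddSmulOnes, finsetSum_coeff, sum_comm]
  exact sum_congr rfl fun φ _ => prod_X_add_C_coeff _ _ hk

end GraphPoly

theorem eulerian_second_deriv_vanishes_general {V : Type} [Fintype V] [LinearOrder V]
    (H : SimpleGraph V) [DecidableRel H.Adj]
    (heul : ∀ v : V, Even (H.degree v)) (he : 2 ≤ edgeCount H)
    (n : ℕ) :
    iteratedDeriv 2
      (fun s : ℝ => graphPoly H (blockMat n + s • onesMat (2*n))) 0 = 0 := by
  have hcoeff : (graphPolyAddSmulOnes H (blockMat n)).coeff 2 = 0 := by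
    rw [coeff_graphPolyAddSmulOnes H _ he]
    refine sum_eq_zero fun T hT => ?_
    obtain ⟨hsub, hcard⟩ := mem_powersetCard.1 hT
    obtain ⟨w, hw⟩ := exists_odd_pairDegree_of_card_sdiff_eq_two H heul hsub
      (by rw [card_sdiff_of_subset hsub, hcard]; exact Nat.sub_sub_self he)
    simp_rw [blockMat_apply_eq_mul, sum_prod_mul_eq_prod_sum_pow]
    exact prod_eq_zero (mem_univ w) (sum_blockSign_pow_of_odd n hw)
  simp_rw [← eval_graphPolyAddSmulOnes]
  rw [iteratedDeriv_eval_zero, hcoeff, mul_zero]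

theorem eulerian_second_deriv_vanishes {V : Type} [Fintype V] [LinearOrder V]
    (H : SimpleGraph V) [DecidableRel H.Adj]
    (heul : ∀ v : V, Even (H.degree v)) (he : 2 ≤ edgeCount H)
    (n : ℕ) (hn : 1 ≤ n) :
    iteratedDeriv 2
      (fun s : ℝ => graphPoly H (blockMat n + s • onesMat (2*n))) 0 = 0 :=
  eulerian_second_deriv_vanishes_general H heul he n
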